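/- arXiv:0811.4255 — 2 statements merged into one kernel-verified Lean document; each statement's English description precedes it below -/
import Mathlib

section
/- Let m₁ ≥ 2 be an even integer, m₂ ≥ 1, Q = m₁ + 2m₂, k = (m₁+2)/2, h = m₂ and N = k + h (so that (Q+2)/(Q−2) = N/(N−2)). Let Φ̃ : (0,∞)×ℝ^h → ℝ and let ψ : (0,∞)×ℝ^h → (0,∞) be of class C². Define u(y,z) = ψ(|y|,z) for (y,z) ∈ (ℝ^{m₁}∖{0})×ℝ^{m₂} and v(w,z) = ψ(|w|^{1/2},z) for (w,z) ∈ (ℝ^k∖{0})×ℝ^h. Then u satisfies the Grushin-type equation −Δ_y u(y,z) − 4|y|² Δ_z u(y,z) = Φ̃(|y|,z) u(y,z)^{(Q+2)/(Q−2)} at every point with y ≠ 0 if and only if v satisfies the Hardy–Sobolev-type equation −Δv(w,z) = (Φ̃(|w|^{1/2},z)/4) · v(w,z)^{N/(N−2)}/|w| at every point with w ≠ 0. -/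
/-!
Both equations see `ψ` only through `g(s) = ψ(√s, z)` with `s = |y|² = |w|`. In `ℝⁿ` the
Laplacian of `x ↦ g(|x|²)` is `4s g''(s) + 2n g'(s)`, while the Laplacian of `x ↦ g(|x|)` is the
radial operator `g''(s) + (n - 1)/s g'(s)`. For `m₁ = 2(k - 1)` the Grushin operator at `|y|² = s`
is therefore `4s` times the Hardy–Sobolev operator at `|w| = s`, the `z`-Laplacians match because
`√|w| = |y|`, and the exponents agree because `Q = 2N - 2`.
-/

open MeasureTheory Real

noncomputable section

/-- The second derivative of `u` at `x` in direction `v` (twice in the same direction). -/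
def sder {X : Type*} [NormedAddCommGroup X] [NormedSpace ℝ X] (u : X → ℝ) (x v : X) : ℝ :=
  fderiv ℝ (fun x' => fderiv ℝ u x' v) x v

open Filter Topology

section
variable {X : Type*} [NormedAddCommGroup X] [NormedSpace ℝ X]

theorem sder_eq_deriv_deriv {f : X → ℝ} {x : X} (hf : ContDiffAt ℝ 2 f x) (v : X) :
    sder f x v = deriv (deriv fun s : ℝ => f (x + s • v)) 0 := by
  have hline : ∀ s : ℝ, HasDerivAt (fun s : ℝ => x + s • v) v s := fun s => by
    simpa using ((hasDerivAt_id s).smul_const v).const_add x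
  have hdiff : ∀ᶠ s in 𝓝 (0 : ℝ), DifferentiableAt ℝ f (x + s • v) :=
    (hline 0).continuousAt.eventually (by
      simpa using (hf.eventually (by simp)).mono fun y hy => hy.differentiableAt two_ne_zero)
  have hderiv : deriv (fun s : ℝ => f (x + s • v)) =ᶠ[𝓝 0] fun s => fderiv ℝ f (x + s • v) v := by
    filter_upwards [hdiff] with s hs
    exact (hs.hasFDerivAt.comp_hasDerivAt s (hline s)).deriv
  have hF : DifferentiableAt ℝ (fun x' => fderiv ℝ f x' v) x :=
    ((hf.fderiv_right (m := 1) le_rfl).differentiableAt one_ne_zero).clm_apply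
      (differentiableAt_const v)
  rw [hderiv.deriv_eq]
  exact (hF.hasFDerivAt.comp_hasDerivAt_of_eq 0 (hline 0) (by simp)).deriv.symm

variable {Y : Type*} [NormedAddCommGroup Y] [NormedSpace ℝ Y]

theorem sder_prod_fst {f : X × Y → ℝ} {x : X} {y : Y} (hf : ContDiffAt ℝ 2 f (x, y)) (v : X) :
    sder f (x, y) (v, 0) = sder (fun x' => f (x', y)) x v := by
  have hfx : ContDiffAt ℝ 2 (fun x' => f (x', y)) x :=
    hf.comp x (contDiffAt_id.prodMk contDiffAt_const)
  rw [sder_eq_deriv_deriv hf, sder_eq_deriv_deriv hfx]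
  simp

theorem sder_prod_snd {f : X × Y → ℝ} {x : X} {y : Y} (hf : ContDiffAt ℝ 2 f (x, y)) (v : Y) :
    sder f (x, y) (0, v) = sder (fun y' => f (x, y')) y v := by
  have hfy : ContDiffAt ℝ 2 (fun y' => f (x, y')) y :=
    hf.comp y (contDiffAt_const.prodMk contDiffAt_id)
  rw [sder_eq_deriv_deriv hf, sder_eq_deriv_deriv hfy]
  simp

end

theorem deriv_deriv_comp {g f : ℝ → ℝ} {x : ℝ} (hg : ContDiffAt ℝ 2 g (f x))
    (hf : ContDiffAt ℝ 2 f x) :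
    deriv (deriv (g ∘ f)) x
      = deriv (deriv g) (f x) * deriv f x ^ 2 + deriv g (f x) * deriv (deriv f) x := by
  simpa only [iteratedDeriv_succ, iteratedDeriv_zero] using iteratedDeriv_comp_two hg hf

section
variable {E : Type*} [NormedAddCommGroup E] [InnerProductSpace ℝ E]

theorem sder_comp_norm_sq {g : ℝ → ℝ} {x : E} (hg : ContDiffAt ℝ 2 g (‖x‖ ^ 2)) (v : E) :
    sder (fun y => g (‖y‖ ^ 2)) x v
      = 4 * deriv (deriv g) (‖x‖ ^ 2) * inner ℝ x v ^ 2 + 2 * deriv g (‖x‖ ^ 2) * ‖v‖ ^ 2 := by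
  set q : ℝ → ℝ := fun s => ‖x‖ ^ 2 + 2 * inner ℝ x v * s + ‖v‖ ^ 2 * s ^ 2
  have hq : (fun s : ℝ => g (‖x + s • v‖ ^ 2)) = g ∘ q := by
    funext s
    simp only [Function.comp, q, norm_add_sq_real, inner_smul_right, norm_smul, mul_pow,
      Real.norm_eq_abs, sq_abs]
    ring_nf
  have hq' : deriv q = fun s => 2 * inner ℝ x v + 2 * ‖v‖ ^ 2 * s := by
    funext s
    refine HasDerivAt.deriv ?_
    convert (((hasDerivAt_id s).const_mul (2 * inner ℝ x v)).add
      ((hasDerivAt_pow 2 s).const_mul (‖v‖ ^ 2))).const_add (‖x‖ ^ 2) using 1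
    · ext t; simp [q, add_assoc]
    · simp; ring
  have hq'' : deriv (deriv q) 0 = 2 * ‖v‖ ^ 2 := by
    rw [hq']
    simp
  have hgx : ContDiffAt ℝ 2 (fun y : E => g (‖y‖ ^ 2)) x :=
    hg.comp x (contDiff_norm_sq ℝ).contDiffAt
  rw [sder_eq_deriv_deriv hgx, hq,
    deriv_deriv_comp (by simpa [q] using hg) (by fun_prop), hq'', hq']
  simp only [q, mul_zero, add_zero, zero_pow two_ne_zero]
  ring

theorem sum_sder_comp_norm_sq {ι : Type*} [Fintype ι] (b : OrthonormalBasis ι ℝ E) {g : ℝ → ℝ}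
    {x : E} (hg : ContDiffAt ℝ 2 g (‖x‖ ^ 2)) :
    ∑ i, sder (fun y => g (‖y‖ ^ 2)) x (b i)
      = 4 * ‖x‖ ^ 2 * deriv (deriv g) (‖x‖ ^ 2) + 2 * Fintype.card ι * deriv g (‖x‖ ^ 2) := by
  simp only [sder_comp_norm_sq hg, b.orthonormal.1, Finset.sum_add_distrib, ← Finset.mul_sum,
    b.sum_sq_inner_left, one_pow, Finset.sum_const, Finset.card_univ, nsmul_eq_mul]
  ring

theorem sum_sder_comp_norm {ι : Type*} [Fintype ι] (b : OrthonormalBasis ι ℝ E) {G : ℝ → ℝ}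
    {x : E} (hx : x ≠ 0) (hG : ContDiffAt ℝ 2 G ‖x‖) :
    ∑ i, sder (fun y => G ‖y‖) x (b i)
      = deriv (deriv G) ‖x‖ + (Fintype.card ι - 1) / ‖x‖ * deriv G ‖x‖ := by
  have hr : 0 < ‖x‖ := norm_pos_iff.2 hx
  set H : ℝ → ℝ := fun s => G √s
  have hGh : (fun y : E => G ‖y‖) = fun y => H (‖y‖ ^ 2) := by
    funext y
    simp [H, Real.sqrt_sq (norm_nonneg y)]
  have hh : ContDiffAt ℝ 2 H (‖x‖ ^ 2) := by
    rw [← Real.sqrt_sq hr.le] at hG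
    exact hG.comp _ (Real.contDiffAt_sqrt (by positivity))
  have hGeq : G =ᶠ[𝓝 ‖x‖] H ∘ fun t => t ^ 2 := by
    filter_upwards [eventually_gt_nhds hr] with t ht
    simp [H, Real.sqrt_sq ht.le]
  have hsq : deriv (fun t : ℝ => t ^ 2) = fun t => 2 * t := by
    funext t; simp
  have hG' : deriv G ‖x‖ = deriv H (‖x‖ ^ 2) * (2 * ‖x‖) := by
    rw [hGeq.deriv_eq, deriv_comp (h := fun t : ℝ => t ^ 2) _ (hh.differentiableAt two_ne_zero)
      (by fun_prop), hsq]
  have hG'' : deriv (deriv G) ‖x‖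
      = deriv (deriv H) (‖x‖ ^ 2) * (2 * ‖x‖) ^ 2 + deriv H (‖x‖ ^ 2) * 2 := by
    rw [hGeq.deriv.deriv_eq, deriv_deriv_comp (f := fun t : ℝ => t ^ 2) hh (by fun_prop), hsq]
    simp
  rw [hGh, sum_sder_comp_norm_sq b hh, hG', hG'']
  field_simp
  ring

end

section
variable {E F : Type*} [NormedAddCommGroup E] [InnerProductSpace ℝ E]
  [NormedAddCommGroup F] [NormedSpace ℝ F] {Ψ : ℝ × F → ℝ} {x : E} {z : F}

theorem sder_prod_comp_fst {φ : E → ℝ} (hφ : ContDiffAt ℝ 2 φ x)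
    (hΨ : ContDiffAt ℝ 2 Ψ (φ x, z)) (v : E) :
    sder (fun p : E × F => Ψ (φ p.1, p.2)) (x, z) (v, 0) = sder (fun y => Ψ (φ y, z)) x v :=
  sder_prod_fst (hΨ.comp (x, z) (hφ.prodMap contDiffAt_id)) v

theorem sder_prod_comp_snd {φ : E → ℝ} (hφ : ContDiffAt ℝ 2 φ x)
    (hΨ : ContDiffAt ℝ 2 Ψ (φ x, z)) (v : F) :
    sder (fun p : E × F => Ψ (φ p.1, p.2)) (x, z) (0, v) = sder (fun z' => Ψ (φ x, z')) z v :=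
  sder_prod_snd (hΨ.comp (x, z) (hφ.prodMap contDiffAt_id)) v

theorem contDiffAt_sqrt_norm {n : WithTop ℕ∞} (hx : x ≠ 0) :
    ContDiffAt ℝ n (fun y : E => √‖y‖) x :=
  (Real.contDiffAt_sqrt (norm_ne_zero_iff.2 hx)).comp x (contDiffAt_norm ℝ hx)

variable {ι : Type*} [Fintype ι] (b : OrthonormalBasis ι ℝ E)
include b

theorem sum_sder_prod_comp_norm (hx : x ≠ 0) (hΨ : ContDiffAt ℝ 2 Ψ (‖x‖, z)) :
    ∑ i, sder (fun p : E × F => Ψ (‖p.1‖, p.2)) (x, z) (b i, 0)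
      = 4 * ‖x‖ ^ 2 * deriv (deriv fun s => Ψ (√s, z)) (‖x‖ ^ 2)
        + 2 * Fintype.card ι * deriv (fun s => Ψ (√s, z)) (‖x‖ ^ 2) := by
  have hg : ContDiffAt ℝ 2 (fun s => Ψ (√s, z)) (‖x‖ ^ 2) := by
    rw [← Real.sqrt_sq (norm_nonneg x)] at hΨ
    exact hΨ.comp (‖x‖ ^ 2) ((Real.contDiffAt_sqrt (by positivity)).prodMk contDiffAt_const)
  have hΨg : (fun y : E => Ψ (‖y‖, z)) = fun y => Ψ (√(‖y‖ ^ 2), z) := by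
    simp only [Real.sqrt_sq (norm_nonneg _)]
  simp only [sder_prod_comp_fst (contDiffAt_norm ℝ hx) hΨ, hΨg]
  exact sum_sder_comp_norm_sq b hg

theorem sum_sder_prod_comp_sqrt_norm (hx : x ≠ 0) (hΨ : ContDiffAt ℝ 2 Ψ (√‖x‖, z)) :
    ∑ i, sder (fun p : E × F => Ψ (√‖p.1‖, p.2)) (x, z) (b i, 0)
      = deriv (deriv fun s => Ψ (√s, z)) ‖x‖
        + (Fintype.card ι - 1) / ‖x‖ * deriv (fun s => Ψ (√s, z)) ‖x‖ := by
  simp only [sder_prod_comp_fst (contDiffAt_sqrt_norm hx) hΨ]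
  exact sum_sder_comp_norm b hx
    (hΨ.comp ‖x‖ ((Real.contDiffAt_sqrt (norm_ne_zero_iff.2 hx)).prodMk contDiffAt_const))

end

theorem forall_ne_zero_iff_of_norm_eq_sq {E₁ E₂ Z : Type*} [NormedAddCommGroup E₁]
    [NormedSpace ℝ E₁] [Nontrivial E₁] [NormedAddCommGroup E₂] [NormedSpace ℝ E₂] [Nontrivial E₂]
    {P : E₁ → Z → Prop} {Q : E₂ → Z → Prop}
    (hPQ : ∀ y w z, y ≠ 0 → ‖w‖ = ‖y‖ ^ 2 → (P y z ↔ Q w z)) :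
    (∀ y z, y ≠ 0 → P y z) ↔ (∀ w z, w ≠ 0 → Q w z) := by
  constructor
  · intro hP w z hw
    obtain ⟨y, hy⟩ := exists_norm_eq E₁ (Real.sqrt_nonneg ‖w‖)
    have hy0 : y ≠ 0 := norm_pos_iff.1 (hy ▸ Real.sqrt_pos.2 (norm_pos_iff.2 hw))
    exact (hPQ y w z hy0 (by rw [hy, Real.sq_sqrt (norm_nonneg w)])).1 (hP y z hy0)
  · intro hQ y z hy
    obtain ⟨w, hw⟩ := exists_norm_eq E₂ (sq_nonneg ‖y‖)
    have hw0 : w ≠ 0 := norm_pos_iff.1 (hw ▸ pow_pos (norm_pos_iff.2 hy) 2)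
    exact (hPQ y w z hy hw).2 (hQ w z hw0)

theorem stmt2_general (m₁ m₂ k : ℕ) (hk : 2 ≤ k) (hm₁ : m₁ = 2 * (k - 1))
    (Φ : ℝ × EuclideanSpace ℝ (Fin m₂) → ℝ)
    (ψ : ℝ × EuclideanSpace ℝ (Fin m₂) → ℝ)
    (hψ : ContDiffOn ℝ 2 ψ (Set.Ioi (0 : ℝ) ×ˢ (Set.univ : Set (EuclideanSpace ℝ (Fin m₂))))) :
    -- the Grushin-type equation for `u(y,z) = ψ(|y|,z)` on `(ℝ^{m₁}\{0}) × ℝ^{m₂}`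
    (∀ (y : EuclideanSpace ℝ (Fin m₁)) (z : EuclideanSpace ℝ (Fin m₂)), y ≠ 0 →
        -(∑ i : Fin m₁,
            sder (fun p : EuclideanSpace ℝ (Fin m₁) × EuclideanSpace ℝ (Fin m₂) =>
              ψ (‖p.1‖, p.2)) (y, z) (EuclideanSpace.single i 1, 0))
          - 4 * ‖y‖ ^ 2 * (∑ j : Fin m₂,
            sder (fun p : EuclideanSpace ℝ (Fin m₁) × EuclideanSpace ℝ (Fin m₂) =>
              ψ (‖p.1‖, p.2)) (y, z) (0, EuclideanSpace.single j 1))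
          = Φ (‖y‖, z) *
              ψ (‖y‖, z) ^ ((((m₁ : ℝ) + 2 * m₂) + 2) / (((m₁ : ℝ) + 2 * m₂) - 2)))
    ↔
    -- the Hardy–Sobolev-type equation for `v(w,z) = ψ(|w|^{1/2},z)` on `(ℝ^k\{0}) × ℝ^{m₂}`
    (∀ (w : EuclideanSpace ℝ (Fin k)) (z : EuclideanSpace ℝ (Fin m₂)), w ≠ 0 →
        -((∑ i : Fin k,
             sder (fun p : EuclideanSpace ℝ (Fin k) × EuclideanSpace ℝ (Fin m₂) =>
               ψ (Real.sqrt ‖p.1‖, p.2)) (w, z) (EuclideanSpace.single i 1, 0))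
           + ∑ j : Fin m₂,
             sder (fun p : EuclideanSpace ℝ (Fin k) × EuclideanSpace ℝ (Fin m₂) =>
               ψ (Real.sqrt ‖p.1‖, p.2)) (w, z) (0, EuclideanSpace.single j 1))
          = (Φ (Real.sqrt ‖w‖, z) / 4) *
              ψ (Real.sqrt ‖w‖, z) ^ (((k : ℝ) + m₂) / (((k : ℝ) + m₂) - 2)) / ‖w‖) := by
  have hψ' : ∀ r : ℝ, 0 < r → ∀ z, ContDiffAt ℝ 2 ψ (r, z) := fun r hr z =>
    hψ.contDiffAt ((isOpen_Ioi.prod isOpen_univ).mem_nhds ⟨hr, trivial⟩)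
  have hm₁R : (m₁ : ℝ) = 2 * ((k : ℝ) - 1) := by
    rw [hm₁, Nat.cast_mul, Nat.cast_sub (by omega)]; norm_num
  have hexp : (((m₁ : ℝ) + 2 * m₂) + 2) / (((m₁ : ℝ) + 2 * m₂) - 2)
      = ((k : ℝ) + m₂) / (((k : ℝ) + m₂) - 2) := by
    rw [hm₁R, show 2 * ((k : ℝ) - 1) + 2 * m₂ + 2 = 2 * ((k : ℝ) + m₂) by ring,
      show 2 * ((k : ℝ) - 1) + 2 * m₂ - 2 = 2 * ((k : ℝ) + m₂ - 2) by ring,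
      mul_div_mul_left _ _ two_ne_zero]
  have : NeZero m₁ := ⟨by omega⟩
  have : NeZero k := ⟨by omega⟩
  refine forall_ne_zero_iff_of_norm_eq_sq fun y w z hy hw => ?_
  have hr : 0 < ‖y‖ := norm_pos_iff.2 hy
  have hw0 : w ≠ 0 := norm_pos_iff.1 (hw ▸ by positivity)
  have hψy := hψ' _ hr z
  have hψw := hψ' _ (Real.sqrt_pos.2 (norm_pos_iff.2 hw0)) z
  simp only [← EuclideanSpace.basisFun_apply, sum_sder_prod_comp_norm _ hy hψy,
    sum_sder_prod_comp_sqrt_norm _ hw0 hψw, sder_prod_comp_snd (contDiffAt_norm ℝ hy) hψy,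
    sder_prod_comp_snd (contDiffAt_sqrt_norm hw0) hψw]
  rw [hw, Real.sqrt_sq hr.le, hexp, Fintype.card_fin, Fintype.card_fin, hm₁R]
  constructor <;> intro h <;> field_simp at h ⊢ <;> linarith

theorem stmt2 (m₁ m₂ k : ℕ) (hk : 2 ≤ k) (hm₁ : m₁ = 2 * (k - 1)) (hm₂ : 1 ≤ m₂)
    (Φ : ℝ × EuclideanSpace ℝ (Fin m₂) → ℝ)
    (ψ : ℝ × EuclideanSpace ℝ (Fin m₂) → ℝ)
    (hψ : ContDiffOn ℝ 2 ψ (Set.Ioi (0 : ℝ) ×ˢ (Set.univ : Set (EuclideanSpace ℝ (Fin m₂)))))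
    (hψpos : ∀ q ∈ Set.Ioi (0 : ℝ) ×ˢ (Set.univ : Set (EuclideanSpace ℝ (Fin m₂))),
      0 < ψ q) :
    -- the Grushin-type equation for `u(y,z) = ψ(|y|,z)` on `(ℝ^{m₁}\{0}) × ℝ^{m₂}`
    (∀ (y : EuclideanSpace ℝ (Fin m₁)) (z : EuclideanSpace ℝ (Fin m₂)), y ≠ 0 →
        -(∑ i : Fin m₁,
            sder (fun p : EuclideanSpace ℝ (Fin m₁) × EuclideanSpace ℝ (Fin m₂) =>
              ψ (‖p.1‖, p.2)) (y, z) (EuclideanSpace.single i 1, 0))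
          - 4 * ‖y‖ ^ 2 * (∑ j : Fin m₂,
            sder (fun p : EuclideanSpace ℝ (Fin m₁) × EuclideanSpace ℝ (Fin m₂) =>
              ψ (‖p.1‖, p.2)) (y, z) (0, EuclideanSpace.single j 1))
          = Φ (‖y‖, z) *
              ψ (‖y‖, z) ^ ((((m₁ : ℝ) + 2 * m₂) + 2) / (((m₁ : ℝ) + 2 * m₂) - 2)))
    ↔
    -- the Hardy–Sobolev-type equation for `v(w,z) = ψ(|w|^{1/2},z)` on `(ℝ^k\{0}) × ℝ^{m₂}`
    (∀ (w : EuclideanSpace ℝ (Fin k)) (z : EuclideanSpace ℝ (Fin m₂)), w ≠ 0 →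
        -((∑ i : Fin k,
             sder (fun p : EuclideanSpace ℝ (Fin k) × EuclideanSpace ℝ (Fin m₂) =>
               ψ (Real.sqrt ‖p.1‖, p.2)) (w, z) (EuclideanSpace.single i 1, 0))
           + ∑ j : Fin m₂,
             sder (fun p : EuclideanSpace ℝ (Fin k) × EuclideanSpace ℝ (Fin m₂) =>
               ψ (Real.sqrt ‖p.1‖, p.2)) (w, z) (0, EuclideanSpace.single j 1))
          = (Φ (Real.sqrt ‖w‖, z) / 4) *
              ψ (Real.sqrt ‖w‖, z) ^ (((k : ℝ) + m₂) / (((k : ℝ) + m₂) - 2)) / ‖w‖) :=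
  stmt2_general m₁ m₂ k hk hm₁ Φ ψ hψ

end
end

section
/- Let n ≥ 1 and k = n+1. Let ψ : (0,∞)×ℝ → ℝ be of class C¹, and define u(Z,t) = ψ(|Z|,t) for (Z,t) ∈ (ℝ^{2n}∖{0})×ℝ and v(y,t) = ψ(|y|^{1/2},t) for (y,t) ∈ (ℝ^k∖{0})×ℝ. Then ∫_{ℝ^{2n}×ℝ} (|∇_Z u|² + 4|Z|²(∂_t u)²) dZ dt = (2ω_{2n}/ω_k) ∫_{ℝ^k×ℝ} |∇v|² dy dt, where both sides may be +∞. In particular the Folland–Stein energy ∫_{ℍⁿ}|∇_{ℍⁿ}u|² dZ dt of a cylindrically symmetric function u, which equals ∫(|∇_Z u|² + 4|Z|²(∂_t u)²) dZ dt, is a constant multiple c_n = 2ω_{2n}/ω_k of the Dirichlet energy of v. -/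
open MeasureTheory Real Filter

noncomputable section

/-- Points of `ℝ^{2n} × ℝ`, written `(Z,t)`. -/
abbrev HPt (n : ℕ) := EuclideanSpace ℝ (Fin (2 * n)) × ℝ

/-- `|∇_Z u|²` at `p`. -/
def gradZsq {n : ℕ} (u : HPt n → ℝ) (p : HPt n) : ℝ :=
  ∑ i : Fin (2 * n), (fderiv ℝ u p (EuclideanSpace.single i 1, 0)) ^ 2

/-- `∇_Z u · ∇_Z ψ` at `p`. -/
def gradZdot {n : ℕ} (u ψ : HPt n → ℝ) (p : HPt n) : ℝ :=
  ∑ i : Fin (2 * n),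
    fderiv ℝ u p (EuclideanSpace.single i 1, 0) * fderiv ℝ ψ p (EuclideanSpace.single i 1, 0)

/-- `∂_t u` at `p`. -/
def dt {n : ℕ} (u : HPt n → ℝ) (p : HPt n) : ℝ :=
  fderiv ℝ u p ((0 : EuclideanSpace ℝ (Fin (2 * n))), (1 : ℝ))

/-- The cylindrical energy density `|∇_Z u|² + 4|Z|²(∂_t u)²`. -/
def cylEnergyDens {n : ℕ} (u : HPt n → ℝ) (p : HPt n) : ℝ :=
  gradZsq u p + 4 * ‖p.1‖ ^ 2 * dt u p ^ 2

/-- The cylindrical energy `E(u) = ∫ (|∇_Z u|² + 4|Z|²(∂_t u)²) dZ dt`. -/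
def cylEnergy {n : ℕ} (u : HPt n → ℝ) : ℝ := ∫ p : HPt n, cylEnergyDens u p

/-- Finiteness of the cylindrical energy. -/
def HasFiniteCylEnergy {n : ℕ} (u : HPt n → ℝ) : Prop := Integrable (cylEnergyDens u)

/-- Cylindrical symmetry: `u(Z,t) = u(|Z|,t)`. -/
def Cylindrical {n : ℕ} (u : HPt n → ℝ) : Prop :=
  ∀ (Z Z' : EuclideanSpace ℝ (Fin (2 * n))) (t : ℝ), ‖Z‖ = ‖Z'‖ → u (Z, t) = u (Z', t)

/-- Weak solution of `-Δ_Z u - 4|Z|²∂²_t u = Φ u^{(Q+2)/(Q-2)}`, `Q = 2n+2`. -/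
def HWeakSol (n : ℕ) (Φ u : HPt n → ℝ) : Prop :=
  ∀ ψ : HPt n → ℝ, ContDiff ℝ (⊤ : ℕ∞) ψ → HasCompactSupport ψ →
    (∫ p : HPt n, (gradZdot u ψ p + 4 * ‖p.1‖ ^ 2 * dt u p * dt ψ p))
      = ∫ p : HPt n, Φ p * u p ^ ((2 * (n : ℝ) + 4) / (2 * (n : ℝ))) * ψ p

/-- The standard bubble `V_{s,λ}(Z,t) = (2n)^n λ^n ((1+λ²|Z|²)² + λ⁴(t-s)²)^{-n/2}`. -/
def Vbub (n : ℕ) (s lam : ℝ) (p : HPt n) : ℝ :=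
  (2 * (n : ℝ)) ^ (n : ℕ) * lam ^ (n : ℕ) *
    ((1 + lam ^ 2 * ‖p.1‖ ^ 2) ^ 2 + lam ^ 4 * (p.2 - s) ^ 2) ^ (-(n : ℝ) / 2)

/-- `ω_m`, the surface measure of the unit sphere `S^{m-1} ⊂ ℝ^m`
(equal to `m` times the volume of the unit ball). -/
def sphereMeasure (m : ℕ) : ℝ :=
  (m : ℝ) * (volume (Metric.ball (0 : EuclideanSpace ℝ (Fin m)) 1)).toReal

end
open MeasureTheory Real Filter Set Metric
open scoped ENNReal RealInnerProductSpace

noncomputable section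

lemma lintegral_norm_polar {E : Type*} [NormedAddCommGroup E] [NormedSpace ℝ E]
    [MeasurableSpace E] [BorelSpace E] [Nontrivial E] [FiniteDimensional ℝ E]
    (μ : Measure E) [μ.IsAddHaarMeasure] (f : ℝ → ℝ≥0∞) (hf : Measurable f) :
    ∫⁻ x, f ‖x‖ ∂μ = (Module.finrank ℝ E) * μ (ball 0 1) *
      ∫⁻ y in Ioi (0 : ℝ), ENNReal.ofReal (y ^ (Module.finrank ℝ E - 1)) * f y := by
  have h1 : ∫⁻ x, f ‖x‖ ∂μ = ∫⁻ x : ({(0)}ᶜ : Set E), f ‖x.1‖ ∂(μ.comap (↑)) := by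
    rw [lintegral_subtype_comap (measurableSet_singleton _).compl fun x ↦ f ‖x‖,
      restrict_compl_singleton]
  have h2 := μ.measurePreserving_homeomorphUnitSphereProd.lintegral_comp_emb
      (Homeomorph.measurableEmbedding _) (fun x : sphere (0:E) 1 × Ioi (0:ℝ) => f x.2)
  have h2' : ∀ x : ({(0)}ᶜ : Set E), f ‖x.1‖ =
      (fun x : sphere (0:E) 1 × Ioi (0:ℝ) => f x.2) (homeomorphUnitSphereProd E x) := by
    intro x; simp
  rw [h1, funext h2', h2]
  rw [lintegral_prod _ (by
    exact ((hf.comp measurable_subtype_coe).comp measurable_snd).aemeasurable)]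
  simp only [lintegral_const]
  rw [Measure.volumeIoiPow]
  rw [lintegral_withDensity_eq_lintegral_mul _ (by
      exact (measurable_subtype_coe.pow_const _).ennreal_ofReal)
      (g := fun y : Ioi (0:ℝ) => f y.1) (hf.comp measurable_subtype_coe)]
  simp only [Pi.mul_apply]
  rw [lintegral_subtype_comap measurableSet_Ioi
      (fun y : ℝ => ENNReal.ofReal (y ^ (Module.finrank ℝ E - 1)) * f y)]
  rw [Measure.toSphere_apply_univ, mul_comm]

lemma hasFDerivAt_norm' {E : Type*} [NormedAddCommGroup E] [InnerProductSpace ℝ E]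
    {x : E} (hx : x ≠ 0) :
    HasFDerivAt (fun y : E => ‖y‖) (‖x‖⁻¹ • innerSL ℝ x) x := by
  have hx' : (0:ℝ) < ‖x‖ := norm_pos_iff.2 hx
  have h1 : HasFDerivAt (fun y : E => ‖y‖ ^ 2) (2 • innerSL ℝ x) x :=
    (hasStrictFDerivAt_norm_sq x).hasFDerivAt
  have h2 : HasDerivAt Real.sqrt (1 / (2 * Real.sqrt (‖x‖ ^ 2))) (‖x‖ ^ 2) :=
    Real.hasDerivAt_sqrt (by positivity)
  have h3 := h2.comp_hasFDerivAt x h1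
  have h4 : (Real.sqrt ∘ fun y : E => ‖y‖ ^ 2) = fun y : E => ‖y‖ := by
    funext y; exact Real.sqrt_sq (norm_nonneg y)
  rw [h4] at h3
  convert h3 using 1
  · rfl
  · rfl
  rw [Real.sqrt_sq hx'.le]
  ext y
  simp only [ContinuousLinearMap.coe_smul', Pi.smul_apply, smul_eq_mul,
    ContinuousLinearMap.smul_apply, nsmul_eq_mul, Nat.cast_ofNat]
  field_simp

lemma key_eval {E : Type*} [NormedAddCommGroup E] [InnerProductSpace ℝ E]
    (ψ : ℝ × ℝ → ℝ) {h : ℝ → ℝ} {h' : ℝ} (p : E × ℝ) (hp : p.1 ≠ 0)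
    (hh : HasDerivAt h h' ‖p.1‖) (hψd : DifferentiableAt ℝ ψ (h ‖p.1‖, p.2)) :
    (∀ w : E, fderiv ℝ (fun q : E × ℝ => ψ (h ‖q.1‖, q.2)) p (w, 0)
        = (h' * (‖p.1‖⁻¹ * ⟪p.1, w⟫)) * fderiv ℝ ψ (h ‖p.1‖, p.2) (1, 0))
    ∧ fderiv ℝ (fun q : E × ℝ => ψ (h ‖q.1‖, q.2)) p (0, 1)
        = fderiv ℝ ψ (h ‖p.1‖, p.2) (0, 1) := by
  set D := fderiv ℝ ψ (h ‖p.1‖, p.2) with hD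
  have hn : HasFDerivAt (fun y : E => h ‖y‖) (h' • (‖p.1‖⁻¹ • innerSL ℝ p.1)) p.1 :=
    hh.comp_hasFDerivAt p.1 (hasFDerivAt_norm' hp)
  have hφ : HasFDerivAt (fun q : E × ℝ => (h ‖q.1‖, q.2))
      (((h' • (‖p.1‖⁻¹ • innerSL ℝ p.1)).comp (ContinuousLinearMap.fst ℝ E ℝ)).prod
        (ContinuousLinearMap.snd ℝ E ℝ)) p :=
    (hn.comp p hasFDerivAt_fst).prodMk hasFDerivAt_snd
  have hu : HasFDerivAt (fun q : E × ℝ => ψ (h ‖q.1‖, q.2))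
      (D.comp ((((h' • (‖p.1‖⁻¹ • innerSL ℝ p.1)).comp (ContinuousLinearMap.fst ℝ E ℝ)).prod
        (ContinuousLinearMap.snd ℝ E ℝ)))) p :=
    hψd.hasFDerivAt.comp p hφ
  rw [hu.fderiv]
  constructor
  · intro w
    have : ((((h' • (‖p.1‖⁻¹ • innerSL ℝ p.1)).comp (ContinuousLinearMap.fst ℝ E ℝ)).prod
        (ContinuousLinearMap.snd ℝ E ℝ))) (w, (0:ℝ))
        = ((h' * (‖p.1‖⁻¹ * ⟪p.1, w⟫)) • ((1:ℝ), (0:ℝ))) := by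
      simp [Prod.ext_iff, smul_eq_mul, mul_assoc]
    simp only [ContinuousLinearMap.comp_apply, this, D.map_smul, smul_eq_mul]
  · have : ((((h' • (‖p.1‖⁻¹ • innerSL ℝ p.1)).comp (ContinuousLinearMap.fst ℝ E ℝ)).prod
        (ContinuousLinearMap.snd ℝ E ℝ))) ((0:E), (1:ℝ)) = ((0:ℝ), (1:ℝ)) := by
      simp [Prod.ext_iff]
    simp only [ContinuousLinearMap.comp_apply, this]

lemma sum_sq_eq_norm_sq {m : ℕ} (x : EuclideanSpace ℝ (Fin m)) :
    ∑ i, x i ^ 2 = ‖x‖ ^ 2 := by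
  have : ‖x‖ ^ 2 = ∑ i, ‖x i‖ ^ 2 := by
    rw [EuclideanSpace.norm_eq]
    exact Real.sq_sqrt (by positivity)
  rw [this]
  simp [Real.norm_eq_abs, sq_abs]

lemma cylDens_eq {n : ℕ} (ψ : ℝ × ℝ → ℝ) (p : HPt n) (hp : p.1 ≠ 0)
    (hψd : DifferentiableAt ℝ ψ (‖p.1‖, p.2)) :
    cylEnergyDens (fun q : HPt n => ψ (‖q.1‖, q.2)) p =
      fderiv ℝ ψ (‖p.1‖, p.2) (1, 0) ^ 2 + 4 * ‖p.1‖ ^ 2 * fderiv ℝ ψ (‖p.1‖, p.2) (0, 1) ^ 2 := by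
  have hk := key_eval (E := EuclideanSpace ℝ (Fin (2*n))) ψ (h := fun x => x)
    (h' := 1) p hp (hasDerivAt_id' _) hψd
  obtain ⟨h1, h2⟩ := hk
  have hns : (0:ℝ) < ‖p.1‖ := norm_pos_iff.2 hp
  unfold cylEnergyDens gradZsq dt
  rw [h2]
  congr 1
  calc ∑ i : Fin (2*n), (fderiv ℝ (fun q : HPt n => ψ (‖q.1‖, q.2)) p
        (EuclideanSpace.single i 1, 0)) ^ 2
      = ∑ i : Fin (2*n), ((‖p.1‖⁻¹ * fderiv ℝ ψ (‖p.1‖, p.2) (1, 0))^2 * (p.1 i)^2) := by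
        refine Finset.sum_congr rfl fun i _ => ?_
        rw [h1 (EuclideanSpace.single i 1)]
        have : ⟪p.1, EuclideanSpace.single i (1:ℝ)⟫ = p.1 i := by
          simp [EuclideanSpace.inner_single_right]
        rw [this]; ring
    _ = (‖p.1‖⁻¹ * fderiv ℝ ψ (‖p.1‖, p.2) (1, 0))^2 * ‖p.1‖^2 := by
        rw [← Finset.mul_sum, sum_sq_eq_norm_sq]
    _ = fderiv ℝ ψ (‖p.1‖, p.2) (1, 0) ^ 2 := by
        field_simp

lemma rhsDens_eq {k : ℕ} (ψ : ℝ × ℝ → ℝ) (q : EuclideanSpace ℝ (Fin k) × ℝ) (hq : q.1 ≠ 0)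
    (hψd : DifferentiableAt ℝ ψ (Real.sqrt ‖q.1‖, q.2)) :
    (∑ i : Fin k, (fderiv ℝ (fun r : EuclideanSpace ℝ (Fin k) × ℝ =>
        ψ (Real.sqrt ‖r.1‖, r.2)) q (EuclideanSpace.single i 1, 0)) ^ 2)
      + (fderiv ℝ (fun r : EuclideanSpace ℝ (Fin k) × ℝ =>
        ψ (Real.sqrt ‖r.1‖, r.2)) q ((0 : EuclideanSpace ℝ (Fin k)), (1:ℝ))) ^ 2
    = fderiv ℝ ψ (Real.sqrt ‖q.1‖, q.2) (1,0) ^ 2 / (4 * ‖q.1‖)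
      + fderiv ℝ ψ (Real.sqrt ‖q.1‖, q.2) (0,1) ^ 2 := by
  have hns : (0:ℝ) < ‖q.1‖ := norm_pos_iff.2 hq
  have hsq : Real.sqrt ‖q.1‖ ≠ 0 := by positivity
  have hk := key_eval (E := EuclideanSpace ℝ (Fin k)) ψ (h := Real.sqrt)
    (h' := 1/(2 * Real.sqrt ‖q.1‖)) q hq (Real.hasDerivAt_sqrt hns.ne') hψd
  obtain ⟨h1, h2⟩ := hk
  rw [h2]
  congr 1
  calc ∑ i : Fin k, (fderiv ℝ (fun r : EuclideanSpace ℝ (Fin k) × ℝ =>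
        ψ (Real.sqrt ‖r.1‖, r.2)) q (EuclideanSpace.single i 1, 0)) ^ 2
      = ∑ i : Fin k, ((1/(2 * Real.sqrt ‖q.1‖) * ‖q.1‖⁻¹ *
          fderiv ℝ ψ (Real.sqrt ‖q.1‖, q.2) (1, 0))^2 * (q.1 i)^2) := by
        refine Finset.sum_congr rfl fun i _ => ?_
        rw [h1 (EuclideanSpace.single i 1)]
        have : ⟪q.1, EuclideanSpace.single i (1:ℝ)⟫ = q.1 i := by
          simp [EuclideanSpace.inner_single_right]
        rw [this]; ring
    _ = (1/(2 * Real.sqrt ‖q.1‖) * ‖q.1‖⁻¹ *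
          fderiv ℝ ψ (Real.sqrt ‖q.1‖, q.2) (1, 0))^2 * ‖q.1‖^2 := by
        rw [← Finset.mul_sum, sum_sq_eq_norm_sq]
    _ = fderiv ℝ ψ (Real.sqrt ‖q.1‖, q.2) (1,0) ^ 2 / (4 * ‖q.1‖) := by
        have hss : Real.sqrt ‖q.1‖ ^ 2 = ‖q.1‖ := Real.sq_sqrt hns.le
        field_simp
        rw [mul_comm]
        ring_nf
        rw [Real.sq_sqrt hns.le]
        ring

def aden (ψ : ℝ × ℝ → ℝ) (z : ℝ × ℝ) : ℝ := fderiv ℝ ψ z (1, 0)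
def bden (ψ : ℝ × ℝ → ℝ) (z : ℝ × ℝ) : ℝ := fderiv ℝ ψ z (0, 1)
def gden (ψ : ℝ × ℝ → ℝ) (z : ℝ × ℝ) : ℝ := aden ψ z ^ 2 + 4 * z.1 ^ 2 * bden ψ z ^ 2
def hden (ψ : ℝ × ℝ → ℝ) (z : ℝ × ℝ) : ℝ :=
  aden ψ (Real.sqrt z.1, z.2) ^ 2 / (4 * z.1) + bden ψ (Real.sqrt z.1, z.2) ^ 2

lemma measurable_aden (ψ : ℝ × ℝ → ℝ) : Measurable (aden ψ) := by
  unfold aden; exact measurable_fderiv_apply_const (𝕜 := ℝ) (E := ℝ × ℝ) (F := ℝ) (f := ψ) ((1:ℝ),(0:ℝ))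
lemma measurable_bden (ψ : ℝ × ℝ → ℝ) : Measurable (bden ψ) := by
  unfold bden; exact measurable_fderiv_apply_const (𝕜 := ℝ) (E := ℝ × ℝ) (F := ℝ) (f := ψ) ((0:ℝ),(1:ℝ))
lemma measurable_gden (ψ : ℝ × ℝ → ℝ) : Measurable (gden ψ) := by
  apply ((measurable_aden ψ).pow_const 2).add
  exact ((measurable_const.mul (measurable_fst.pow_const 2)).mul
    ((measurable_bden ψ).pow_const 2))
lemma measurable_hden (ψ : ℝ × ℝ → ℝ) : Measurable (hden ψ) := by
  have hs : Measurable (fun z : ℝ × ℝ => (Real.sqrt z.1, z.2)) :=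
    (measurable_fst.sqrt).prodMk measurable_snd
  exact ((((measurable_aden ψ).comp hs).pow_const 2).div
    (measurable_const.mul measurable_fst)).add
    (((measurable_bden ψ).comp hs).pow_const 2)

lemma ae_fst_ne_zero {m : ℕ} (hm : 0 < m) :
    ∀ᵐ p : (EuclideanSpace ℝ (Fin m)) × ℝ, p.1 ≠ 0 := by
  haveI : Nontrivial (EuclideanSpace ℝ (Fin m)) :=
    Module.nontrivial_of_finrank_pos (R := ℝ) (by rw [finrank_euclideanSpace_fin]; exact hm)
  rw [ae_iff]
  have hset : {p : EuclideanSpace ℝ (Fin m) × ℝ | ¬ p.1 ≠ 0}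
      = ({0} : Set (EuclideanSpace ℝ (Fin m))) ×ˢ (univ : Set ℝ) := by
    ext p
    simp only [mem_setOf_eq, not_not, mem_prod, mem_singleton_iff, mem_univ, and_true]
  rw [hset, Measure.volume_eq_prod, Measure.prod_prod, measure_singleton, zero_mul]

theorem stmt3 (n : ℕ) (hn : 1 ≤ n) (ψ : ℝ × ℝ → ℝ)
    (hψ : ContDiffOn ℝ 1 ψ (Set.Ioi (0 : ℝ) ×ˢ (Set.univ : Set ℝ))) :
    (∫⁻ p : HPt n, ENNReal.ofReal (cylEnergyDens (fun q : HPt n => ψ (‖q.1‖, q.2)) p))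
      = ENNReal.ofReal (2 * sphereMeasure (2 * n) / sphereMeasure (n + 1)) *
        ∫⁻ q : EuclideanSpace ℝ (Fin (n + 1)) × ℝ,
          ENNReal.ofReal
            ((∑ i : Fin (n + 1),
                (fderiv ℝ (fun r : EuclideanSpace ℝ (Fin (n + 1)) × ℝ =>
                    ψ (Real.sqrt ‖r.1‖, r.2)) q (EuclideanSpace.single i 1, 0)) ^ 2)
              + (fderiv ℝ (fun r : EuclideanSpace ℝ (Fin (n + 1)) × ℝ =>
                    ψ (Real.sqrt ‖r.1‖, r.2)) q
                  ((0 : EuclideanSpace ℝ (Fin (n + 1))), (1 : ℝ))) ^ 2) := by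
  classical
  have h2n : (0:ℕ) < 2 * n := by omega
  have hk : (0:ℕ) < n + 1 := by omega
  haveI hNT2 : Nontrivial (EuclideanSpace ℝ (Fin (2 * n))) :=
    Module.nontrivial_of_finrank_pos (R := ℝ) (by rw [finrank_euclideanSpace_fin]; exact h2n)
  haveI hNTk : Nontrivial (EuclideanSpace ℝ (Fin (n + 1))) :=
    Module.nontrivial_of_finrank_pos (R := ℝ) (by rw [finrank_euclideanSpace_fin]; exact hk)
  have hdiff : ∀ r : ℝ, 0 < r → ∀ t : ℝ, DifferentiableAt ℝ ψ (r, t) := by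
    intro r hr t
    have hmem : Set.Ioi (0:ℝ) ×ˢ (Set.univ : Set ℝ) ∈ nhds ((r, t) : ℝ × ℝ) :=
      (isOpen_Ioi.prod isOpen_univ).mem_nhds ⟨hr, trivial⟩
    exact (hψ.contDiffAt hmem).differentiableAt one_ne_zero
  -- rewrite LHS integrand a.e.
  have hL1 : (∫⁻ p : HPt n, ENNReal.ofReal (cylEnergyDens (fun q : HPt n => ψ (‖q.1‖, q.2)) p))
      = ∫⁻ p : HPt n, ENNReal.ofReal (gden ψ (‖p.1‖, p.2)) := by
    refine lintegral_congr_ae ?_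
    filter_upwards [ae_fst_ne_zero h2n] with p hp
    rw [cylDens_eq ψ p hp (hdiff _ (norm_pos_iff.2 hp) _)]
    rfl
  -- rewrite RHS integrand a.e.
  have hR1 : (∫⁻ q : EuclideanSpace ℝ (Fin (n + 1)) × ℝ,
        ENNReal.ofReal
          ((∑ i : Fin (n + 1),
              (fderiv ℝ (fun r : EuclideanSpace ℝ (Fin (n + 1)) × ℝ =>
                  ψ (Real.sqrt ‖r.1‖, r.2)) q (EuclideanSpace.single i 1, 0)) ^ 2)
            + (fderiv ℝ (fun r : EuclideanSpace ℝ (Fin (n + 1)) × ℝ =>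
                  ψ (Real.sqrt ‖r.1‖, r.2)) q
                ((0 : EuclideanSpace ℝ (Fin (n + 1))), (1 : ℝ))) ^ 2))
      = ∫⁻ q : EuclideanSpace ℝ (Fin (n + 1)) × ℝ, ENNReal.ofReal (hden ψ (‖q.1‖, q.2)) := by
    refine lintegral_congr_ae ?_
    filter_upwards [ae_fst_ne_zero hk] with q hq
    rw [rhsDens_eq ψ q hq (hdiff _ (Real.sqrt_pos.2 (norm_pos_iff.2 hq)) _)]
    rfl
  rw [hL1, hR1]
  -- Tonelli on both sides
  have hmapm : ∀ m : ℕ, Measurable (fun p : (EuclideanSpace ℝ (Fin m)) × ℝ => (‖p.1‖, p.2)) :=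
    fun m => (measurable_fst.norm).prodMk measurable_snd
  rw [Measure.volume_eq_prod, lintegral_prod_symm'
      (fun p : EuclideanSpace ℝ (Fin (2*n)) × ℝ => ENNReal.ofReal (gden ψ (‖p.1‖, p.2)))
      (by exact ((measurable_gden ψ).comp (hmapm (2*n))).ennreal_ofReal),
    Measure.volume_eq_prod (EuclideanSpace ℝ (Fin (n+1))) ℝ, lintegral_prod_symm'
      (fun q : EuclideanSpace ℝ (Fin (n+1)) × ℝ => ENNReal.ofReal (hden ψ (‖q.1‖, q.2)))
      (by exact ((measurable_hden ψ).comp (hmapm (n+1))).ennreal_ofReal)]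
  -- polar coordinates in the inner integrals
  have hpolar2 : ∀ t : ℝ, (∫⁻ Z : EuclideanSpace ℝ (Fin (2*n)), ENNReal.ofReal (gden ψ (‖Z‖, t)))
      = ((2*n : ℕ) : ℝ≥0∞) * volume (ball (0 : EuclideanSpace ℝ (Fin (2*n))) 1) *
        ∫⁻ r in Ioi (0:ℝ), ENNReal.ofReal (r ^ (2*n - 1)) * ENNReal.ofReal (gden ψ (r, t)) := by
    intro t
    have := lintegral_norm_polar (volume : Measure (EuclideanSpace ℝ (Fin (2*n))))
      (fun r => ENNReal.ofReal (gden ψ (r, t)))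
      (((measurable_gden ψ).comp (measurable_id.prodMk measurable_const)).ennreal_ofReal)
    rwa [finrank_euclideanSpace_fin] at this
  have hpolark : ∀ t : ℝ, (∫⁻ y : EuclideanSpace ℝ (Fin (n+1)), ENNReal.ofReal (hden ψ (‖y‖, t)))
      = ((n+1 : ℕ) : ℝ≥0∞) * volume (ball (0 : EuclideanSpace ℝ (Fin (n+1))) 1) *
        ∫⁻ ρ in Ioi (0:ℝ), ENNReal.ofReal (ρ ^ n) * ENNReal.ofReal (hden ψ (ρ, t)) := by
    intro t
    have := lintegral_norm_polar (volume : Measure (EuclideanSpace ℝ (Fin (n+1))))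
      (fun ρ => ENNReal.ofReal (hden ψ (ρ, t)))
      (((measurable_hden ψ).comp (measurable_id.prodMk measurable_const)).ennreal_ofReal)
    rwa [finrank_euclideanSpace_fin, Nat.add_sub_cancel] at this
  simp only [hpolar2, hpolark]
  -- substitution ρ = r² in the radial integral of the RHS
  have hsub : ∀ t : ℝ, (∫⁻ ρ in Ioi (0:ℝ), ENNReal.ofReal (ρ ^ n) * ENNReal.ofReal (hden ψ (ρ, t)))
      = ENNReal.ofReal (1/2) *
        ∫⁻ r in Ioi (0:ℝ), ENNReal.ofReal (r ^ (2*n - 1)) * ENNReal.ofReal (gden ψ (r, t)) := by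
    intro t
    have himg : (fun r : ℝ => r ^ 2) '' Ioi 0 = Ioi 0 := by
      ext ρ; constructor
      · rintro ⟨r, hr, rfl⟩; exact pow_pos (show (0:ℝ) < r from hr) 2
      · intro hρ; exact ⟨Real.sqrt ρ, Real.sqrt_pos.2 hρ, Real.sq_sqrt hρ.le⟩
    have hder : ∀ x ∈ Ioi (0:ℝ), HasFDerivWithinAt (fun r : ℝ => r ^ 2)
        ((1 : ℝ →L[ℝ] ℝ).smulRight (2*x)) (Ioi 0) x := by
      intro x hx
      have h := (hasDerivAt_pow 2 x).hasDerivWithinAt (s := Ioi 0)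
      norm_num at h
      exact h.hasFDerivWithinAt
    have hinj : InjOn (fun r : ℝ => r ^ 2) (Ioi 0) := by
      intro a ha b hb hab
      have : |a| = |b| := by
        rw [← Real.sqrt_sq_eq_abs, ← Real.sqrt_sq_eq_abs]
        exact congrArg Real.sqrt hab
      rwa [abs_of_pos ha, abs_of_pos hb] at this
    have hcv := lintegral_image_eq_lintegral_abs_det_fderiv_mul volume measurableSet_Ioi hder hinj
        (fun ρ => ENNReal.ofReal (ρ ^ n) * ENNReal.ofReal (hden ψ (ρ, t)))
    rw [himg] at hcv
    rw [hcv, ← lintegral_const_mul' _ _ (by simp : (ENNReal.ofReal (1/2)) ≠ ⊤)]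
    refine setLIntegral_congr_fun measurableSet_Ioi (fun x hx => ?_)
    have hx0 : (0:ℝ) < x := hx
    rw [ContinuousLinearMap.det_smulRight, ContinuousLinearMap.one_apply, one_mul]
    have hsq : Real.sqrt (x^2) = x := Real.sqrt_sq hx0.le
    have hhg : hden ψ (x^2, t) = aden ψ (x, t) ^ 2 / (4 * x^2) + bden ψ (x, t) ^ 2 := by
      unfold hden; rw [hsq]
    have hxpow : (x^2)^n = x^(2*n-1) * x := by
      rw [← pow_mul, ← pow_succ]; congr 1; omega
    have hre : |2*x| * ((x^2)^n * (aden ψ (x, t) ^ 2 / (4 * x^2) + bden ψ (x, t) ^ 2))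
        = (1/2) * (x^(2*n-1) * gden ψ (x, t)) := by
      rw [abs_of_pos (by positivity : (0:ℝ) < 2*x), hxpow]
      unfold gden
      field_simp
      ring
    rw [hhg, ← ENNReal.ofReal_mul (pow_nonneg (sq_nonneg x) n),
      ← ENNReal.ofReal_mul (abs_nonneg _), hre,
      ENNReal.ofReal_mul (by norm_num : (0:ℝ) ≤ 1/2),
      ENNReal.ofReal_mul (pow_nonneg hx0.le _)]
  simp only [hsub]
  have hfin2 : ((2*n : ℕ) : ℝ≥0∞) * volume (ball (0 : EuclideanSpace ℝ (Fin (2*n))) 1) ≠ ⊤ :=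
    (ENNReal.mul_lt_top (ENNReal.natCast_lt_top _) measure_ball_lt_top).ne
  have hfink : ((n+1 : ℕ) : ℝ≥0∞) * volume (ball (0 : EuclideanSpace ℝ (Fin (n+1))) 1) ≠ ⊤ :=
    (ENNReal.mul_lt_top (ENNReal.natCast_lt_top _) measure_ball_lt_top).ne
  rw [lintegral_const_mul' _ _ hfin2, lintegral_const_mul' _ _ hfink,
    lintegral_const_mul' _ _ (by simp : (ENNReal.ofReal (1/2)) ≠ ⊤)]
  have hCm : ∀ m : ℕ, ((m : ℕ) : ℝ≥0∞) * volume (ball (0 : EuclideanSpace ℝ (Fin m)) 1)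
      = ENNReal.ofReal (sphereMeasure m) := by
    intro m
    rw [sphereMeasure, ENNReal.ofReal_mul (by positivity), ENNReal.ofReal_natCast,
      ENNReal.ofReal_toReal measure_ball_lt_top.ne]
  have hballpos : (0:ℝ) < (volume (ball (0 : EuclideanSpace ℝ (Fin (n+1))) 1)).toReal :=
    ENNReal.toReal_pos (measure_ball_pos volume 0 one_pos).ne' measure_ball_lt_top.ne
  have hωk : (0:ℝ) < sphereMeasure (n+1) := by
    rw [sphereMeasure]; positivity
  have hω2 : (0:ℝ) ≤ sphereMeasure (2*n) := by
    rw [sphereMeasure]; positivity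
  have hcnn : (0:ℝ) ≤ 2 * sphereMeasure (2*n) / sphereMeasure (n+1) :=
    div_nonneg (by linarith) hωk.le
  have hc : (((2*n : ℕ) : ℝ≥0∞) * volume (ball (0 : EuclideanSpace ℝ (Fin (2*n))) 1))
      = ENNReal.ofReal (2 * sphereMeasure (2*n) / sphereMeasure (n+1)) *
        (((n+1 : ℕ) : ℝ≥0∞) * volume (ball (0 : EuclideanSpace ℝ (Fin (n+1))) 1)) *
        ENNReal.ofReal (1/2) := by
    rw [hCm (2*n), hCm (n+1), ← ENNReal.ofReal_mul hcnn,
      ← ENNReal.ofReal_mul (mul_nonneg hcnn hωk.le)]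
    congr 1
    field_simp
  rw [hc]
  ring
end
end
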